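/- For real p with 1 < p < n (n > 1 an integer): ν(p',n)·cos(π/n) + μ(p',n)·cos(π/p') = π_{p,n}/2, where p' = p/(p-1). -/

import Mathlib

/-!
Substituting `t = s ^ (1/n)` and `t = s ^ (-1/n)` on `(0, 1)`, resp. `t ^ n = s / (1 - s)`,
turns the three integrals into Euler Beta integrals:
`π_{p,n} / 2 = B(1/n, 1/p') / n`, `μ = B(1/p - 1/n, 1/p') / n`, `ν = B(1/n, 1/p - 1/n) / n`.
By the reflection formula, `B(u, v) = Γ(u) Γ(v) Γ(1 - u - v) sin (π (u + v)) / π`, so all three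
carry the common factor `Γ(1/n) Γ(1/p - 1/n) Γ(1/p') / π`, and the identity reduces to the
addition formula `sin (π/p - π/n) = sin (π/p) cos (π/n) - cos (π/p) sin (π/n)`.
-/

open Real MeasureTheory Set ProbabilityTheory

theorem integral_Ioo_rpow_mul_one_sub_rpow_eq_beta {u v : ℝ} (hu : 0 < u) (hv : 0 < v) :
    ∫ s in Ioo (0:ℝ) 1, s ^ (u - 1) * (1 - s) ^ (v - 1) = beta u v := by
  have h : Complex.betaIntegral u v =
      ↑(∫ s in (0:ℝ)..1, s ^ (u - 1) * (1 - s) ^ (v - 1)) := by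
    rw [Complex.betaIntegral, ← intervalIntegral.integral_ofReal]
    refine intervalIntegral.integral_congr fun s hs => ?_
    rw [uIcc_of_le zero_le_one] at hs
    simp only [Complex.ofReal_mul, Complex.ofReal_cpow hs.1,
      Complex.ofReal_cpow (sub_nonneg.2 hs.2)]
    push_cast
    rfl
  rw [beta_eq_betaIntegralReal u v hu hv, h, Complex.ofReal_re,
    intervalIntegral.integral_of_le zero_le_one, integral_Ioc_eq_integral_Ioo]

theorem setIntegral_image_rpow (g : ℝ → ℝ) {s : Set ℝ} (hs : MeasurableSet s)
    (hs0 : s ⊆ Ioi 0) {c : ℝ} (hc : c ≠ 0) :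
    ∫ y in (· ^ c) '' s, g y = ∫ x in s, |c| * x ^ (c - 1) * g (x ^ c) := by
  rw [integral_image_eq_integral_abs_deriv_smul hs
    (fun x hx => (hasDerivAt_rpow_const (Or.inl (hs0 hx).ne')).hasDerivWithinAt)
    ((rpow_left_injOn hc).mono fun x hx => (mem_Ioi.1 (hs0 hx)).le)]
  refine setIntegral_congr_fun hs fun x hx => ?_
  rw [smul_eq_mul, abs_mul, abs_of_pos (rpow_pos_of_pos (hs0 hx) _)]

theorem image_rpow_Ioo_zero_one {c : ℝ} (hc : 0 < c) : (· ^ c) '' Ioo (0:ℝ) 1 = Ioo 0 1 := by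
  refine Subset.antisymm ?_ fun y hy => ⟨y ^ c⁻¹, ?_, rpow_inv_rpow hy.1.le hc.ne'⟩
  · rintro _ ⟨x, hx, rfl⟩
    exact ⟨rpow_pos_of_pos hx.1 c, rpow_lt_one hx.1.le hx.2 hc⟩
  · exact ⟨rpow_pos_of_pos hy.1 _, rpow_lt_one hy.1.le hy.2 (inv_pos.2 hc)⟩

theorem image_rpow_Ioo_zero_one_of_neg {c : ℝ} (hc : c < 0) :
    (· ^ c) '' Ioo (0:ℝ) 1 = Ioi 1 := by
  refine Subset.antisymm ?_ fun y (hy : 1 < y) =>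
    ⟨y ^ c⁻¹, ?_, rpow_inv_rpow (zero_le_one.trans hy.le) hc.ne⟩
  · rintro _ ⟨x, hx, rfl⟩
    exact one_lt_rpow_of_pos_of_lt_one_of_neg hx.1 hx.2 hc
  · exact ⟨rpow_pos_of_pos (zero_lt_one.trans hy) _,
      rpow_lt_one_of_one_lt_of_neg hy (inv_lt_zero.2 hc)⟩

theorem image_div_one_sub_Ioo_zero_one : (fun s : ℝ => s / (1 - s)) '' Ioo 0 1 = Ioi 0 := by
  refine Subset.antisymm ?_ fun y (hy : 0 < y) => ⟨y / (1 + y), ?_, ?_⟩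
  · rintro _ ⟨x, hx, rfl⟩
    exact div_pos hx.1 (sub_pos.2 hx.2)
  · exact ⟨by positivity, (div_lt_one (by positivity)).2 (lt_one_add y)⟩
  · field_simp
    ring

theorem hasDerivAt_div_one_sub {s : ℝ} (hs : s ≠ 1) :
    HasDerivAt (fun s : ℝ => s / (1 - s)) ((1 - s) ^ 2)⁻¹ s := by
  have h1s : 1 - s ≠ 0 := sub_ne_zero.2 hs.symm
  refine ((hasDerivAt_id' s).fun_div
    ((hasDerivAt_const s 1).fun_sub (hasDerivAt_id' s)) h1s).congr_deriv ?_
  field_simp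
  ring

theorem integral_Ioi_rpow_mul_one_add_rpow_neg_eq_beta {u v : ℝ} (hu : 0 < u) (hv : 0 < v) :
    ∫ x in Ioi (0:ℝ), x ^ (u - 1) * (1 + x) ^ (-(u + v)) = beta u v := by
  have hinj : InjOn (fun s : ℝ => s / (1 - s)) (Ioo 0 1) := fun s hs t ht hst => by
    have := sub_pos.2 hs.2
    have := sub_pos.2 ht.2
    field_simp at hst
    linarith
  rw [← image_div_one_sub_Ioo_zero_one,
    integral_image_eq_integral_abs_deriv_smul measurableSet_Ioo
      (fun s hs => (hasDerivAt_div_one_sub hs.2.ne).hasDerivWithinAt) hinj,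
    ← integral_Ioo_rpow_mul_one_sub_rpow_eq_beta hu hv]
  refine setIntegral_congr_fun measurableSet_Ioo fun s hs => ?_
  have h1s : 0 < 1 - s := sub_pos.2 hs.2
  have hpow : (1 - s) ^ (u + v) = (1 - s) ^ (v - 1) * (1 - s) ^ (u - 1) * (1 - s) ^ 2 := by
    rw [← rpow_natCast, ← rpow_add h1s, ← rpow_add h1s]
    ring_nf
  have hsum : 1 + s / (1 - s) = (1 - s)⁻¹ := by
    field_simp
    ring
  rw [smul_eq_mul, hsum, abs_of_pos (by positivity), div_rpow hs.1.le h1s.le, inv_rpow h1s.le,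
    rpow_neg h1s.le, inv_inv, hpow]
  field_simp

section PowerIntegrals

variable {n : ℕ} {a : ℝ}

theorem integral_Ioo_one_sub_pow_rpow_neg (hn : n ≠ 0) (ha : a < 1) :
    ∫ t in Ioo (0:ℝ) 1, (1 - t ^ n) ^ (-a) = (n:ℝ)⁻¹ * beta (n:ℝ)⁻¹ (1 - a) := by
  have hn' : (0:ℝ) < (n:ℝ)⁻¹ := by positivity
  rw [← image_rpow_Ioo_zero_one hn',
    setIntegral_image_rpow _ measurableSet_Ioo Ioo_subset_Ioi_self hn'.ne',
    ← integral_Ioo_rpow_mul_one_sub_rpow_eq_beta hn' (sub_pos.2 ha), ← integral_const_mul]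
  refine setIntegral_congr_fun measurableSet_Ioo fun s hs => ?_
  rw [abs_of_pos hn', rpow_inv_natCast_pow hs.1.le hn, sub_sub_cancel_left, mul_assoc]

theorem integral_Ioi_pow_sub_one_rpow_neg (hn : n ≠ 0) (hna : (n:ℝ)⁻¹ < a) (ha : a < 1) :
    ∫ t in Ioi (1:ℝ), (t ^ n - 1) ^ (-a) = (n:ℝ)⁻¹ * beta (a - (n:ℝ)⁻¹) (1 - a) := by
  have hn' : -(n:ℝ)⁻¹ < 0 := by simp only [neg_lt_zero, inv_pos]; positivity
  rw [← image_rpow_Ioo_zero_one_of_neg hn',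
    setIntegral_image_rpow _ measurableSet_Ioo Ioo_subset_Ioi_self hn'.ne,
    ← integral_Ioo_rpow_mul_one_sub_rpow_eq_beta (sub_pos.2 hna) (sub_pos.2 ha),
    ← integral_const_mul]
  refine setIntegral_congr_fun measurableSet_Ioo fun s hs => ?_
  have h1s : 0 < 1 - s := sub_pos.2 hs.2
  have hsn : (s ^ (-(n:ℝ)⁻¹)) ^ n - 1 = (1 - s) / s := by
    rw [rpow_neg hs.1.le, inv_pow, rpow_inv_natCast_pow hs.1.le hn]
    field_simp [hs.1.ne']
  have hexp : s ^ (a - (n:ℝ)⁻¹ - 1) = s ^ (-(n:ℝ)⁻¹ - 1) * s ^ a := by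
    rw [← rpow_add hs.1]
    ring_nf
  rw [hsn, abs_neg, abs_of_pos (by positivity), div_rpow h1s.le hs.1.le, rpow_neg hs.1.le,
    sub_sub_cancel_left, hexp]
  field_simp

theorem integral_Ioi_one_add_pow_rpow_neg (hn : n ≠ 0) (hna : (n:ℝ)⁻¹ < a) :
    ∫ t in Ioi (0:ℝ), (1 + t ^ n) ^ (-a) =
      (n:ℝ)⁻¹ * beta (n:ℝ)⁻¹ (a - (n:ℝ)⁻¹) := by
  have hn' : (0:ℝ) < (n:ℝ)⁻¹ := by positivity
  rw [← integral_comp_rpow_Ioi _ hn'.ne',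
    ← integral_Ioi_rpow_mul_one_add_rpow_neg_eq_beta hn' (sub_pos.2 hna), ← integral_const_mul]
  refine setIntegral_congr_fun measurableSet_Ioi fun x hx => ?_
  rw [smul_eq_mul, abs_of_pos hn', rpow_inv_natCast_pow (le_of_lt hx) hn, add_sub_cancel,
    mul_assoc]

end PowerIntegrals

theorem inv_Gamma_eq_Gamma_one_sub_mul_sin {w : ℝ} (hw : sin (π * w) ≠ 0) :
    (Gamma w)⁻¹ = Gamma (1 - w) * sin (π * w) / π := by
  have h := Gamma_mul_Gamma_one_sub w
  have hΓ : Gamma w ≠ 0 := by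
    rintro h0
    rw [h0, zero_mul, eq_comm, div_eq_zero_iff] at h
    exact h.elim pi_ne_zero hw
  field_simp
  rw [h]
  field_simp

theorem beta_eq_Gamma_mul_Gamma_mul_Gamma_one_sub {u v w : ℝ} (huv : u + v = w)
    (hw : sin (π * w) ≠ 0) :
    beta u v = Gamma u * Gamma v * Gamma (1 - w) * sin (π * w) / π := by
  rw [beta, div_eq_mul_inv, huv, inv_Gamma_eq_Gamma_one_sub_mul_sin hw]
  ring

theorem beta_mul_cos_add_beta_mul_cos {x a : ℝ} (hx : sin (π * x) ≠ 0)
    (ha : sin (π * a) ≠ 0) (hax : sin (π * (a - x)) ≠ 0) :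
    beta x (a - x) * cos (π * x) + beta (a - x) (1 - a) * cos (π * (1 - a)) = beta x (1 - a) := by
  have sin_one_sub : ∀ y, sin (π * (1 - y)) = sin (π * y) := fun y => by
    rw [mul_one_sub, sin_pi_sub]
  rw [beta_eq_Gamma_mul_Gamma_mul_Gamma_one_sub (add_sub_cancel x a) ha,
    beta_eq_Gamma_mul_Gamma_mul_Gamma_one_sub (w := 1 - x) (by ring) (by rwa [sin_one_sub]),
    beta_eq_Gamma_mul_Gamma_mul_Gamma_one_sub (w := 1 - (a - x)) (by ring) (by rwa [sin_one_sub]),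
    sin_one_sub, sin_one_sub, sub_sub_cancel, sub_sub_cancel, mul_one_sub, cos_pi_sub,
    mul_sub, sin_sub]
  ring

theorem sin_pi_mul_pos {x : ℝ} (h0 : 0 < x) (h1 : x < 1) : 0 < sin (π * x) :=
  sin_pos_of_pos_of_lt_pi (by positivity) (mul_lt_of_lt_one_right pi_pos h1)

theorem stmt_7_general (p : ℝ) (n : ℕ) (hp : 1 < p) (hpn : p < n) :
    (∫ t in Ioi (0:ℝ), (1 + t ^ n) ^ (-(1/p))) * Real.cos (π / n)
      + (∫ t in Ioi (1:ℝ), (t ^ n - 1) ^ (-(1/p))) * Real.cos (π / (p / (p - 1)))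
      = ∫ t in (0:ℝ)..1, (1 - t ^ n) ^ (-(1/p)) := by
  have hp0 : 0 < p := by linarith
  have hn0 : (0:ℝ) < n := by linarith
  have hx : 0 < (n:ℝ)⁻¹ := inv_pos.2 hn0
  have hxa : (n:ℝ)⁻¹ < 1 / p := by rw [one_div]; exact (inv_lt_inv₀ hn0 hp0).2 hpn
  have ha : 1 / p < 1 := (div_lt_one hp0).2 hp
  have hn : n ≠ 0 := by exact_mod_cast hn0.ne'
  have hcos : π / (p / (p - 1)) = π * (1 - 1 / p) := by
    have : p - 1 ≠ 0 := by linarith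
    field_simp
  rw [intervalIntegral.integral_of_le zero_le_one, integral_Ioc_eq_integral_Ioo,
    integral_Ioo_one_sub_pow_rpow_neg hn ha, integral_Ioi_pow_sub_one_rpow_neg hn hxa ha,
    integral_Ioi_one_add_pow_rpow_neg hn hxa, hcos, div_eq_mul_inv π (n:ℝ),
    ← beta_mul_cos_add_beta_mul_cos (sin_pi_mul_pos hx (hxa.trans ha)).ne'
      (sin_pi_mul_pos (hx.trans hxa) ha).ne' (sin_pi_mul_pos (sub_pos.2 hxa) (by linarith)).ne']
  ring

theorem stmt_7 (p : ℝ) (n : ℕ) (hp : 1 < p) (hn : 1 < n) (hpn : p < n) :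
    (∫ t in Ioi (0:ℝ), (1 + t ^ n) ^ (-(1/p))) * Real.cos (π / n)
      + (∫ t in Ioi (1:ℝ), (t ^ n - 1) ^ (-(1/p))) * Real.cos (π / (p / (p - 1)))
      = ∫ t in (0:ℝ)..1, (1 - t ^ n) ^ (-(1/p)) :=
  stmt_7_general p n hp hpn
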